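/- Let n ≥ 2 and let r̂_1,…,r̂_n be positive keys with pairwise distinct values, and let k ≤ n. For each step j with 1 ≤ j ≤ k, as the temperature t tends to 0 from above, the step-j softmax value p_i^j(t) of the iterative softmax top-k relaxation converges to 1 if i is the index of the j-th largest key among r̂_1,…,r̂_n, and converges to 0 otherwise. -/

import Mathlib

open Filter

/-- Tempered softmax of logits `α : Fin n → ℝ` at temperature `t`. -/
noncomputable def softmaxT {n : ℕ} (t : ℝ) (α : Fin n → ℝ) (i : Fin n) : ℝ :=
  Real.exp (α i / t) / ∑ m, Real.exp (α m / t)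

/-- Logits of the iterative softmax top-k relaxation: `alphaIter t r j` is `α^{j+1}`
(the logits used at the `(j+1)`-th step, 0-indexed). -/
noncomputable def alphaIter {n : ℕ} (t : ℝ) (r : Fin n → ℝ) : ℕ → Fin n → ℝ
  | 0 => fun i => Real.log (r i)
  | j + 1 => fun i =>
      alphaIter t r j i + Real.log (1 - softmaxT t (alphaIter t r j) i)

/-- `pIter t r j i` is the softmax value `p_i^{j+1}` at the `(j+1)`-th step (0-indexed `j`). -/
noncomputable def pIter {n : ℕ} (t : ℝ) (r : Fin n → ℝ) (j : ℕ) (i : Fin n) : ℝ :=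
  softmaxT t (alphaIter t r j) i

/-!
Index the steps from `0`, as `alphaIter` does, and write `ρ(m)` for the number of keys larger
than `r̂_m`. By induction on `j`, the step-`j` logits satisfy `α_m^j = log r̂_m + o(t)` for every
key with `ρ(m) ≥ j`, while `α_m^j → -∞` for the keys with `ρ(m) < j`, which were selected
earlier. So every gap `(α_m^j - α_i^j) / t` to the key `i` with `ρ(i) = j` tends to `-∞`, and
the softmax concentrates on `i`. For the induction step, `1 - p_i^j → 0` sends `α_i^{j+1}` to
`-∞`, whereas for `ρ(m) > j` the bound `p_m^j ≤ exp ((α_m^j - α_i^j) / t) ≈ (r̂_m / r̂_i)^{1/t}`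
decays exponentially in `1/t`, so `log (1 - p_m^j) = o(t)`.
-/

open Filter Topology Finset Real

section Softmax

variable {n : ℕ}

lemma softmaxT_pos (t : ℝ) (α : Fin n → ℝ) (i : Fin n) : 0 < softmaxT t α i :=
  div_pos (exp_pos _) (sum_pos (fun _ _ => exp_pos _) ⟨i, mem_univ i⟩)

lemma softmaxT_le_one (t : ℝ) (α : Fin n → ℝ) (i : Fin n) : softmaxT t α i ≤ 1 :=
  div_le_one_of_le₀ (single_le_sum (f := fun m => exp (α m / t)) (fun _ _ => (exp_pos _).le)
    (mem_univ i)) (sum_nonneg fun _ _ => (exp_pos _).le)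

lemma softmaxT_lt_one [Nontrivial (Fin n)] (t : ℝ) (α : Fin n → ℝ) (i : Fin n) :
    softmaxT t α i < 1 := by
  obtain ⟨m, hm⟩ := exists_ne i
  refine (div_lt_one (sum_pos (fun _ _ => exp_pos _) ⟨i, mem_univ i⟩)).2 ?_
  exact single_lt_sum (f := fun m => exp (α m / t)) hm (mem_univ i) (mem_univ m) (exp_pos _)
    fun _ _ _ => (exp_pos _).le

lemma log_one_sub_softmaxT_nonpos (t : ℝ) (α : Fin n → ℝ) (i : Fin n) :
    log (1 - softmaxT t α i) ≤ 0 :=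
  log_nonpos (sub_nonneg.2 (softmaxT_le_one t α i)) (by linarith [softmaxT_pos t α i])

lemma softmaxT_eq_exp_mul (t : ℝ) (α : Fin n → ℝ) (m i : Fin n) :
    softmaxT t α m = exp ((α m - α i) / t) * softmaxT t α i := by
  rw [softmaxT, softmaxT, sub_div, exp_sub, div_mul_div_comm, mul_comm (exp (α m / t)),
    mul_div_mul_left _ _ (exp_ne_zero _)]

lemma softmaxT_le_exp_sub (t : ℝ) (α : Fin n → ℝ) (m i : Fin n) :
    softmaxT t α m ≤ exp ((α m - α i) / t) := by
  rw [softmaxT_eq_exp_mul t α m i]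
  exact mul_le_of_le_one_right (exp_pos _).le (softmaxT_le_one t α i)

lemma softmaxT_eq_inv_sum (t : ℝ) (α : Fin n → ℝ) (i : Fin n) :
    softmaxT t α i = (∑ m, exp ((α m - α i) / t))⁻¹ := by
  simp only [sub_div, exp_sub, ← sum_div, softmaxT, inv_div]

lemma tendsto_softmaxT_of_tendsto_sub_div_atBot {l : Filter ℝ} {α : ℝ → Fin n → ℝ} {i : Fin n}
    (h : ∀ m ≠ i, Tendsto (fun t => (α t m - α t i) / t) l atBot) (m : Fin n) :
    Tendsto (fun t => softmaxT t (α t) m) l (𝓝 (if m = i then 1 else 0)) := by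
  have hexp : ∀ m, Tendsto (fun t => exp ((α t m - α t i) / t)) l
      (𝓝 (if m = i then 1 else 0)) := by
    intro m
    split_ifs with hm
    · simp only [hm, sub_self, zero_div, exp_zero, tendsto_const_nhds]
    · exact tendsto_exp_atBot.comp (h m hm)
  have hself : Tendsto (fun t => softmaxT t (α t) i) l (𝓝 1) := by
    have hsum := tendsto_finsetSum univ fun m _ => hexp m
    simp only [sum_ite_eq', mem_univ, if_true] at hsum
    simpa only [softmaxT_eq_inv_sum, inv_one] using hsum.inv₀ one_ne_zero
  split_ifs with hm
  · exact hm ▸ hself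
  · simpa only [← softmaxT_eq_exp_mul, if_neg hm, zero_mul] using (hexp m).mul hself

end Softmax

section NearZero

lemma tendsto_of_tendsto_sub_div_nhdsGT_zero {f : ℝ → ℝ} {a : ℝ}
    (h : Tendsto (fun t => (f t - a) / t) (𝓝[>] 0) (𝓝 0)) : Tendsto f (𝓝[>] 0) (𝓝 a) := by
  rw [← tendsto_sub_nhds_zero_iff]
  have hmul := h.mul (tendsto_nhdsWithin_of_tendsto_nhds (tendsto_id (x := 𝓝 (0 : ℝ))))
  rw [zero_mul] at hmul
  refine hmul.congr' ?_
  filter_upwards [self_mem_nhdsWithin] with t (ht : 0 < t)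
  exact div_mul_cancel₀ _ ht.ne'

lemma tendsto_div_nhdsGT_zero_atBot {f : ℝ → ℝ} (h : Tendsto f (𝓝[>] 0) atBot) :
    Tendsto (fun t => f t / t) (𝓝[>] 0) atBot := by
  simpa only [div_eq_mul_inv] using h.atBot_mul_atTop₀ tendsto_inv_nhdsGT_zero

lemma tendsto_const_div_nhdsGT_zero_atBot {c : ℝ} (hc : c < 0) :
    Tendsto (fun t => c / t) (𝓝[>] 0) atBot := by
  simpa only [div_eq_mul_inv] using tendsto_inv_nhdsGT_zero.const_mul_atTop_of_neg hc

lemma tendsto_exp_const_div_div_nhdsGT_zero {c : ℝ} (hc : c < 0) :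
    Tendsto (fun t => exp (c / t) / t) (𝓝[>] 0) (𝓝 0) := by
  have h := (tendsto_rpow_mul_exp_neg_mul_atTop_nhds_zero 1 (-c) (neg_pos.2 hc)).comp
    tendsto_inv_nhdsGT_zero
  refine h.congr fun t => ?_
  simp only [Function.comp, rpow_one, neg_neg, div_eq_mul_inv, mul_comm]

lemma tendsto_log_one_sub_div_nhdsGT_zero {p : ℝ → ℝ} (hp0 : ∀ t, 0 ≤ p t) (hp1 : ∀ t, p t < 1)
    (h : Tendsto (fun t => p t / t) (𝓝[>] 0) (𝓝 0)) :
    Tendsto (fun t => log (1 - p t) / t) (𝓝[>] 0) (𝓝 0) := by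
  have hp : Tendsto p (𝓝[>] 0) (𝓝 0) :=
    tendsto_of_tendsto_sub_div_nhdsGT_zero (by simpa only [sub_zero] using h)
  have hlower : Tendsto (fun t => -(p t / t) / (1 - p t)) (𝓝[>] 0) (𝓝 0) := by
    have hdiv := h.neg.div (tendsto_const_nhds.sub hp) (by norm_num : (1 : ℝ) - 0 ≠ 0)
    rwa [neg_zero, zero_div] at hdiv
  refine tendsto_of_tendsto_of_tendsto_of_le_of_le' hlower tendsto_const_nhds ?_ ?_
  · filter_upwards [self_mem_nhdsWithin] with t (ht : 0 < t)
    have hq : 0 < 1 - p t := sub_pos.2 (hp1 t)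
    have hlog := one_sub_inv_le_log_of_pos hq
    calc -(p t / t) / (1 - p t) = (1 - (1 - p t)⁻¹) / t := by field_simp; ring
      _ ≤ log (1 - p t) / t := div_le_div_of_nonneg_right hlog ht.le
  · filter_upwards [self_mem_nhdsWithin] with t (ht : 0 < t)
    exact div_nonpos_of_nonpos_of_nonneg
      (log_nonpos (sub_nonneg.2 (hp1 t).le) (by linarith [hp0 t])) ht.le

end NearZero

section KeyRank

variable {n : ℕ} {r : Fin n → ℝ}

noncomputable def keyRank (r : Fin n → ℝ) (i : Fin n) : ℕ := #{m | r i < r m}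

lemma keyRank_lt (r : Fin n → ℝ) (i : Fin n) : keyRank r i < n := by
  simpa [keyRank] using card_lt_card (filter_ssubset.2 ⟨i, mem_univ i, lt_irrefl (r i)⟩)

lemma keyRank_lt_keyRank {a b : Fin n} (h : r a < r b) : keyRank r b < keyRank r a := by
  refine card_lt_card ⟨fun m hm => ?_, fun hsub => ?_⟩
  · simp only [mem_filter, mem_univ, true_and] at hm ⊢
    exact h.trans hm
  · simpa using hsub (mem_filter.2 ⟨mem_univ b, h⟩)

lemma keyRank_lt_keyRank_iff (hinj : Function.Injective r) {a b : Fin n} :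
    keyRank r a < keyRank r b ↔ r b < r a := by
  refine ⟨fun h => ?_, keyRank_lt_keyRank⟩
  rcases lt_trichotomy (r b) (r a) with hlt | heq | hgt
  · exact hlt
  · exact absurd h (by rw [hinj heq]; exact lt_irrefl _)
  · exact absurd h (keyRank_lt_keyRank hgt).asymm

lemma keyRank_injective (hinj : Function.Injective r) : Function.Injective (keyRank r) := by
  intro a b h
  refine hinj (le_antisymm ?_ ?_) <;> refine not_lt.1 fun hlt => ?_
  · exact h.not_lt ((keyRank_lt_keyRank_iff hinj).2 hlt)
  · exact h.not_gt ((keyRank_lt_keyRank_iff hinj).2 hlt)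

lemma exists_keyRank_eq (hinj : Function.Injective r) {j : ℕ} (hj : j < n) :
    ∃ i, keyRank r i = j := by
  have hsurj : Function.Surjective fun i => (⟨keyRank r i, keyRank_lt r i⟩ : Fin n) :=
    Finite.injective_iff_surjective.1 fun a b hab =>
      keyRank_injective hinj (congrArg Fin.val hab)
  obtain ⟨i, hi⟩ := hsurj ⟨j, hj⟩
  exact ⟨i, congrArg Fin.val hi⟩

end KeyRank

section Invariant

variable {n : ℕ} {r : Fin n → ℝ} {j : ℕ}

lemma alphaIter_succ (t : ℝ) (r : Fin n → ℝ) (j : ℕ) (m : Fin n) :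
    alphaIter t r (j + 1) m = alphaIter t r j m + log (1 - pIter t r j m) := rfl

structure SelectionInvariant (r : Fin n → ℝ) (j : ℕ) : Prop where
  unselected : ∀ m, j ≤ keyRank r m →
    Tendsto (fun t => (alphaIter t r j m - log (r m)) / t) (𝓝[>] 0) (𝓝 0)
  selected : ∀ m, keyRank r m < j → Tendsto (fun t => alphaIter t r j m) (𝓝[>] 0) atBot

namespace SelectionInvariant

lemma zero (r : Fin n → ℝ) : SelectionInvariant r 0 where
  unselected m _ := by simp [alphaIter]
  selected m hm := absurd hm (Nat.not_lt_zero _)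

variable (h : SelectionInvariant r j)
include h

lemma tendsto_alphaIter {m : Fin n} (hm : j ≤ keyRank r m) :
    Tendsto (fun t => alphaIter t r j m) (𝓝[>] 0) (𝓝 (log (r m))) :=
  tendsto_of_tendsto_sub_div_nhdsGT_zero (h.unselected m hm)

lemma tendsto_sub_div_atBot (hr : ∀ i, 0 < r i) (hinj : Function.Injective r) {i m : Fin n}
    (hi : keyRank r i = j) (hm : m ≠ i) :
    Tendsto (fun t => (alphaIter t r j m - alphaIter t r j i) / t) (𝓝[>] 0) atBot := by
  have hne : keyRank r m ≠ j := fun he => hm (keyRank_injective hinj (he.trans hi.symm))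
  rcases hne.lt_or_gt with hlt | hgt
  · simpa only [← sub_eq_add_neg] using tendsto_div_nhdsGT_zero_atBot
      ((h.selected m hlt).atBot_add (h.tendsto_alphaIter hi.ge).neg)
  · have hc : log (r m) - log (r i) < 0 :=
      sub_neg.2 (log_lt_log (hr m) ((keyRank_lt_keyRank_iff hinj).1 (hi ▸ hgt)))
    refine (((h.unselected m hgt.le).sub (h.unselected i hi.ge)).add_atBot
      (tendsto_const_div_nhdsGT_zero_atBot hc)).congr fun t => ?_
    ring

lemma tendsto_pIter (hr : ∀ i, 0 < r i) (hinj : Function.Injective r) {i : Fin n}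
    (hi : keyRank r i = j) (m : Fin n) :
    Tendsto (fun t => pIter t r j m) (𝓝[>] 0) (𝓝 (if m = i then 1 else 0)) :=
  tendsto_softmaxT_of_tendsto_sub_div_atBot (α := fun t => alphaIter t r j)
    (fun _ hm => h.tendsto_sub_div_atBot hr hinj hi hm) m

lemma tendsto_pIter_div_zero (hr : ∀ i, 0 < r i) (hinj : Function.Injective r) {i m : Fin n}
    (hi : keyRank r i = j) (hm : j < keyRank r m) :
    Tendsto (fun t => pIter t r j m / t) (𝓝[>] 0) (𝓝 0) := by
  set c := log (r m) - log (r i)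
  have hc : c < 0 := sub_neg.2 (log_lt_log (hr m) ((keyRank_lt_keyRank_iff hinj).1 (hi ▸ hm)))
  have hlim := ((h.unselected m hm.le).sub (h.unselected i hi.ge)).rexp.mul
    (tendsto_exp_const_div_div_nhdsGT_zero hc)
  rw [mul_zero] at hlim
  refine squeeze_zero' ?_ ?_ hlim
  · filter_upwards [self_mem_nhdsWithin] with t (ht : 0 < t)
    exact div_nonneg (softmaxT_pos _ _ _).le ht.le
  · filter_upwards [self_mem_nhdsWithin] with t (ht : 0 < t)
    calc pIter t r j m / t ≤ exp ((alphaIter t r j m - alphaIter t r j i) / t) / t :=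
          div_le_div_of_nonneg_right (softmaxT_le_exp_sub _ _ m i) ht.le
      _ = _ := by
        rw [mul_div_assoc', ← exp_add]
        congr 2
        ring

lemma succ (hr : ∀ i, 0 < r i) (hinj : Function.Injective r) (hjn : j + 1 < n) :
    SelectionInvariant r (j + 1) := by
  have : Nontrivial (Fin n) := Fin.nontrivial_iff_two_le.2 (by omega)
  obtain ⟨i, hi⟩ := exists_keyRank_eq hinj (by omega : j < n)
  constructor
  · intro m hm
    have hlog := tendsto_log_one_sub_div_nhdsGT_zero (fun t => (softmaxT_pos _ _ m).le)
      (fun t => softmaxT_lt_one _ _ m) (h.tendsto_pIter_div_zero hr hinj hi (by omega))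
    simpa only [add_zero, alphaIter_succ, pIter, add_div, add_sub_right_comm] using
      (h.unselected m (by omega)).add hlog
  · intro m hm
    rcases Nat.lt_succ_iff_lt_or_eq.1 hm with hlt | heq
    · refine tendsto_atBot_mono (fun t => ?_) (h.selected m hlt)
      exact add_le_of_nonpos_right (log_one_sub_softmaxT_nonpos _ _ _)
    · obtain rfl := keyRank_injective hinj (heq.trans hi.symm)
      have hp : Tendsto (fun t => 1 - pIter t r j m) (𝓝[>] 0) (𝓝[>] 0) := by
        refine tendsto_nhdsWithin_iff.2 ⟨?_, Eventually.of_forall fun t => ?_⟩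
        · simpa using (tendsto_const_nhds (x := (1 : ℝ))).sub (h.tendsto_pIter hr hinj hi m)
        · exact sub_pos.2 (softmaxT_lt_one _ _ m)
      exact (h.tendsto_alphaIter hi.ge).add_atBot (tendsto_log_nhdsGT_zero.comp hp)

end SelectionInvariant

lemma selectionInvariant_of_lt (hr : ∀ i, 0 < r i) (hinj : Function.Injective r) :
    ∀ j < n, SelectionInvariant r j
  | 0, _ => .zero r
  | j + 1, hj => (selectionInvariant_of_lt hr hinj j (by omega)).succ hr hinj hj

end Invariant

theorem pIter_tendsto_jth_largest_general {n : ℕ} (r : Fin n → ℝ)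
    (hr : ∀ i, 0 < r i) (hinj : Function.Injective r) (k : ℕ) (hk : k ≤ n)
    (j : ℕ) (hjk : j ≤ k) (i : Fin n) :
    Tendsto (fun t : ℝ => pIter t r (j - 1) i) (nhdsWithin 0 (Set.Ioi 0))
      (nhds (if (Finset.univ.filter fun m => r i < r m).card = j - 1 then 1 else 0)) := by
  have hj : j - 1 < n := by have := i.pos; omega
  obtain ⟨i₀, hi₀⟩ := exists_keyRank_eq hinj hj
  have hiff : keyRank r i = j - 1 ↔ i = i₀ :=
    ⟨fun h => keyRank_injective hinj (h.trans hi₀.symm), fun h => h ▸ hi₀⟩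
  have hlim := (selectionInvariant_of_lt hr hinj (j - 1) hj).tendsto_pIter hr hinj hi₀ i
  simp only [← hiff] at hlim
  exact hlim

/-- For distinct positive keys, as `t → 0⁺` the step-`j` softmax value `p_i^j(t)` of the
iterative softmax top-k relaxation converges to `1` if `i` is the index of the `j`-th largest
key (i.e. exactly `j - 1` keys exceed `r̂ᵢ`) and to `0` otherwise.  The paper's 1-indexed
step `j` corresponds to index `j - 1` of `pIter`. -/
theorem pIter_tendsto_jth_largest {n : ℕ} (hn : 2 ≤ n) (r : Fin n → ℝ)
    (hr : ∀ i, 0 < r i) (hinj : Function.Injective r) (k : ℕ) (hk : k ≤ n)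
    (j : ℕ) (hj1 : 1 ≤ j) (hjk : j ≤ k) (i : Fin n) :
    Tendsto (fun t : ℝ => pIter t r (j - 1) i) (nhdsWithin 0 (Set.Ioi 0))
      (nhds (if (Finset.univ.filter fun m => r i < r m).card = j - 1 then 1 else 0)) :=
  pIter_tendsto_jth_largest_general r hr hinj k hk j hjk i
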